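/- Let f(n) be an integer sequence and suppose that for some even positive integer s and some real t > 0 one has ∫_0^1 |V_f(x;N)|^s dx ≤ C N^t for all N ∈ ℕ, with a constant C independent of N. Then there is a constant C' such that ∫_0^1 W_f(x;N)^s dx ≤ C' N^t (log N)^s for all N ≥ 2. -/

import Mathlib

open MeasureTheory

noncomputable def eC (z : ℝ) : ℂ := Complex.exp (2 * Real.pi * Complex.I * z)

noncomputable def vSum (f : ℕ → ℝ) (x : ℝ) (N : ℕ) : ℂ :=
  ∑ n ∈ Finset.Icc 1 N, eC (x * f n)

/-- `W_f(x;N) = Σ_{h=-N}^{N} (|h|+1)⁻¹ |Σ_{n=1}^N e(hn/N + x f(n))|`. -/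
noncomputable def wSum (f : ℕ → ℝ) (x : ℝ) (N : ℕ) : ℝ :=
  ∑ h ∈ Finset.Icc (-(N : ℤ)) (N : ℤ),
    (1 / (|(h : ℝ)| + 1)) *
      ‖∑ n ∈ Finset.Icc 1 N, eC ((h : ℝ) * n / N + x * f n)‖

lemma eC_add (a b : ℝ) : eC (a + b) = eC a * eC b := by
  rw [eC, eC, eC, ← Complex.exp_add]; push_cast; ring_nf

lemma eC_conj (a : ℝ) : (starRingEnd ℂ) (eC a) = eC (-a) := by
  rw [eC, eC, ← Complex.exp_conj]; push_cast; ring_nf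
  congr 1; simp [Complex.ext_iff]

lemma eC_abs (a : ℝ) : ‖eC a‖ = 1 := by
  rw [eC, Complex.norm_exp]; norm_num [Complex.mul_re, Complex.mul_im]

lemma integral_eC (k : ℤ) :
    ∫ x in Set.Icc (0:ℝ) 1, eC (x * k) = if k = 0 then 1 else 0 := by
  rw [MeasureTheory.integral_Icc_eq_integral_Ioc,
    ← intervalIntegral.integral_of_le (zero_le_one (α := ℝ))]
  by_cases hk : k = 0
  · simp [hk, eC]
  · have h : ∀ x : ℝ, eC (x * k) = Complex.exp ((2 * Real.pi * Complex.I * k) * x) := by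
      intro x; rw [eC]; push_cast; ring_nf
    simp only [h]
    rw [integral_exp_mul_complex (by simp [Real.pi_ne_zero, Complex.I_ne_zero, hk])]
    simp only [Complex.ofReal_one, mul_one, Complex.ofReal_zero, mul_zero, Complex.exp_zero]
    have : Complex.exp (2 * Real.pi * Complex.I * k) = 1 := by
      rw [show (2 * (Real.pi:ℂ) * Complex.I * k) = (k:ℤ) * (2 * Real.pi * Complex.I) by
        push_cast; ring]
      exact Complex.exp_int_mul_two_pi_mul_I k
    rw [this]; simp [hk]

lemma eC_prod {ι : Type*} (s : Finset ι) (a : ι → ℝ) :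
    ∏ i ∈ s, eC (a i) = eC (∑ i ∈ s, a i) := by
  classical
  induction s using Finset.induction_on with
  | empty => simp [eC]
  | insert a s h ih => rw [Finset.prod_insert h, Finset.sum_insert h, eC_add, ih]

section expand
variable (g : ℕ → ℤ) (c : ℕ → ℂ) (m N : ℕ)

noncomputable def Tc (x : ℝ) : ℂ := ∑ n ∈ Finset.Icc 1 N, c n * eC (x * g n)

def Pfin : Finset (Fin m → ℕ) := Fintype.piFinset fun _ => Finset.Icc 1 N

def Fsum (p : Fin m → ℕ) : ℤ := ∑ i, g (p i)

lemma Tc_pow (x : ℝ) :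
    (Tc g c N x) ^ m = ∑ p ∈ Pfin m N, (∏ i, c (p i)) * eC (x * (Fsum g m p : ℝ)) := by
  have h1 : (Tc g c N x) ^ m = ∏ _i : Fin m, Tc g c N x := by
    simp [Finset.prod_const]
  rw [h1, Tc, Finset.prod_univ_sum]
  refine Finset.sum_congr rfl fun p _ => ?_
  rw [Finset.prod_mul_distrib, eC_prod]
  congr 2
  simp only [Fsum]
  push_cast
  rw [Finset.mul_sum]

lemma Tc_expand (x : ℝ) :
    (Tc g c N x) ^ m * (starRingEnd ℂ) ((Tc g c N x) ^ m) =
    ∑ p ∈ Pfin m N, ∑ q ∈ Pfin m N,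
      (∏ i, c (p i)) * (starRingEnd ℂ) (∏ i, c (q i)) *
        eC (x * ((Fsum g m p - Fsum g m q : ℤ) : ℝ)) := by
  rw [Tc_pow g c m N x, map_sum, Finset.sum_mul_sum]
  refine Finset.sum_congr rfl fun p _ => Finset.sum_congr rfl fun q _ => ?_
  rw [map_mul, eC_conj]
  push_cast
  rw [mul_sub, sub_eq_add_neg, eC_add]
  ring

lemma integral_Tc :
    ∫ x in Set.Icc (0:ℝ) 1, (Tc g c N x) ^ m * (starRingEnd ℂ) ((Tc g c N x) ^ m) =
    ∑ p ∈ Pfin m N, ∑ q ∈ Pfin m N,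
      (∏ i, c (p i)) * (starRingEnd ℂ) (∏ i, c (q i)) *
        (if Fsum g m p = Fsum g m q then 1 else 0) := by
  have hint : ∀ (K : ℤ) (a : ℂ), IntegrableOn (fun x : ℝ => a * eC (x * (K:ℝ)))
      (Set.Icc 0 1) volume := by
    intro K a
    apply Continuous.integrableOn_Icc
    unfold eC; fun_prop
  calc ∫ x in Set.Icc (0:ℝ) 1, (Tc g c N x) ^ m * (starRingEnd ℂ) ((Tc g c N x) ^ m)
      = ∫ x in Set.Icc (0:ℝ) 1, ∑ p ∈ Pfin m N, ∑ q ∈ Pfin m N,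
          (∏ i, c (p i)) * (starRingEnd ℂ) (∏ i, c (q i)) *
            eC (x * ((Fsum g m p - Fsum g m q : ℤ) : ℝ)) := by
        refine setIntegral_congr_fun measurableSet_Icc fun x _ => ?_
        exact Tc_expand g c m N x
    _ = ∑ p ∈ Pfin m N, ∑ q ∈ Pfin m N,
          (∏ i, c (p i)) * (starRingEnd ℂ) (∏ i, c (q i)) *
            (if Fsum g m p = Fsum g m q then 1 else 0) := by
        rw [MeasureTheory.integral_finset_sum _ (fun p _ =>
          MeasureTheory.integrable_finset_sum _ (fun q _ => hint _ _))]
        refine Finset.sum_congr rfl fun p _ => ?_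
        rw [MeasureTheory.integral_finset_sum _ (fun q _ => hint _ _)]
        refine Finset.sum_congr rfl fun q _ => ?_
        rw [MeasureTheory.integral_const_mul, integral_eC]
        congr 1
        simp [sub_eq_zero]

lemma abs_pow_cast (z : ℂ) :
    ((‖z‖ ^ (2 * m) : ℝ) : ℂ) = z ^ m * (starRingEnd ℂ) (z ^ m) := by
  rw [pow_mul, Complex.sq_norm]
  push_cast
  rw [← Complex.mul_conj, mul_pow, map_pow]

lemma Jc_eq :
    Complex.ofReal (∫ x in Set.Icc (0:ℝ) 1, ‖Tc g c N x‖ ^ (2 * m)) =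
    ∑ p ∈ Pfin m N, ∑ q ∈ Pfin m N,
      (∏ i, c (p i)) * (starRingEnd ℂ) (∏ i, c (q i)) *
        (if Fsum g m p = Fsum g m q then 1 else 0) := by
  rw [← integral_Tc g c m N]
  have h0 : Complex.ofReal (∫ x in Set.Icc (0:ℝ) 1, ‖Tc g c N x‖ ^ (2 * m)) =
      ∫ x in Set.Icc (0:ℝ) 1, ((‖Tc g c N x‖ ^ (2 * m) : ℝ) : ℂ) :=
    (integral_ofReal).symm
  rw [h0]
  refine setIntegral_congr_fun measurableSet_Icc fun x _ => ?_
  exact abs_pow_cast m _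

lemma J_one :
    (∫ x in Set.Icc (0:ℝ) 1, ‖Tc g (fun _ => 1) N x‖ ^ (2 * m)) =
    ∑ p ∈ Pfin m N, ∑ q ∈ Pfin m N,
      ((if Fsum g m p = Fsum g m q then (1:ℝ) else 0)) := by
  have h := Jc_eq g (fun _ => 1) m N
  simp only [Finset.prod_const_one, map_one, one_mul] at h
  have : ((∑ p ∈ Pfin m N, ∑ q ∈ Pfin m N,
      ((if Fsum g m p = Fsum g m q then (1:ℝ) else 0)) : ℝ) : ℂ) =
      ∑ p ∈ Pfin m N, ∑ q ∈ Pfin m N,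
      ((if Fsum g m p = Fsum g m q then (1:ℂ) else 0)) := by
    push_cast
    refine Finset.sum_congr rfl fun p _ => Finset.sum_congr rfl fun q _ => ?_
    split <;> simp
  exact Complex.ofReal_injective (h.trans this.symm)

lemma key_lemma (hc : ∀ n, ‖c n‖ ≤ 1) :
    (∫ x in Set.Icc (0:ℝ) 1, ‖Tc g c N x‖ ^ (2 * m)) ≤
    (∫ x in Set.Icc (0:ℝ) 1, ‖Tc g (fun _ => 1) N x‖ ^ (2 * m)) := by
  set J : ℝ := ∫ x in Set.Icc (0:ℝ) 1, ‖Tc g c N x‖ ^ (2 * m) with hJ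
  have hJ0 : 0 ≤ J := by
    apply setIntegral_nonneg measurableSet_Icc
    intro x _; positivity
  have habs : J = ‖(J : ℂ)‖ := by
    rw [Complex.norm_real, Real.norm_of_nonneg hJ0]
  rw [J_one, habs]
  have hJc : (J : ℂ) = ∑ p ∈ Pfin m N, ∑ q ∈ Pfin m N,
      (∏ i, c (p i)) * (starRingEnd ℂ) (∏ i, c (q i)) *
        (if Fsum g m p = Fsum g m q then 1 else 0) := Jc_eq g c m N
  rw [hJc]
  calc ‖∑ p ∈ Pfin m N, ∑ q ∈ Pfin m N,
        (∏ i, c (p i)) * (starRingEnd ℂ) (∏ i, c (q i)) *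
          (if Fsum g m p = Fsum g m q then 1 else 0)‖
      ≤ ∑ p ∈ Pfin m N, ∑ q ∈ Pfin m N, ‖
        (∏ i, c (p i)) * (starRingEnd ℂ) (∏ i, c (q i)) *
          (if Fsum g m p = Fsum g m q then 1 else 0)‖ := by
        refine (norm_sum_le _ _).trans ?_
        exact Finset.sum_le_sum fun p _ => norm_sum_le _ _
    _ ≤ ∑ p ∈ Pfin m N, ∑ q ∈ Pfin m N,
        ((if Fsum g m p = Fsum g m q then (1:ℝ) else 0)) := by
        refine Finset.sum_le_sum fun p _ => Finset.sum_le_sum fun q _ => ?_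
        rw [norm_mul, norm_mul]
        have h1 : ‖∏ i, c (p i)‖ ≤ 1 := by
          rw [norm_prod]
          exact Finset.prod_le_one (fun i _ => norm_nonneg _) (fun i _ => hc _)
        have h2 : ‖(starRingEnd ℂ) (∏ i, c (q i))‖ ≤ 1 := by
          rw [Complex.norm_conj, norm_prod]
          exact Finset.prod_le_one (fun i _ => norm_nonneg _) (fun i _ => hc _)
        have h3 : ‖(if Fsum g m p = Fsum g m q then (1:ℂ) else 0)‖ =
            (if Fsum g m p = Fsum g m q then (1:ℝ) else 0) := by
          split <;> simp
        rw [h3]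
        split
        · rw [mul_one]
          exact mul_le_one₀ h1 (norm_nonneg _) h2
        · simp
end expand


lemma jensen_weighted {ι : Type*} (sfin : Finset ι) (a b : ι → ℝ)
    (ha : ∀ i ∈ sfin, 0 ≤ a i) (hb : ∀ i ∈ sfin, 0 ≤ b i) (n : ℕ) (hn : 1 ≤ n)
    (A : ℝ) (hA : A = ∑ i ∈ sfin, a i) (hA0 : 0 < A) :
    (∑ i ∈ sfin, a i * b i) ^ n ≤ A ^ (n - 1) * ∑ i ∈ sfin, a i * b i ^ n := by
  have hmean := Real.pow_arith_mean_le_arith_mean_pow sfin (fun i => a i / A) b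
    (fun i hi => div_nonneg (ha i hi) hA0.le)
    (by rw [← Finset.sum_div, ← hA, div_self hA0.ne']) hb n
  have hL : (∑ i ∈ sfin, a i / A * b i) = (∑ i ∈ sfin, a i * b i) / A := by
    rw [Finset.sum_div]; exact Finset.sum_congr rfl fun i _ => by ring
  have hR : (∑ i ∈ sfin, a i / A * b i ^ n) = (∑ i ∈ sfin, a i * b i ^ n) / A := by
    rw [Finset.sum_div]; exact Finset.sum_congr rfl fun i _ => by ring
  rw [hL, hR, div_pow] at hmean
  have h1 : (∑ i ∈ sfin, a i * b i) ^ n ≤ (∑ i ∈ sfin, a i * b i ^ n) / A * A ^ n :=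
    (div_le_iff₀ (pow_pos hA0 n)).mp hmean
  refine h1.trans_eq ?_
  have hA' : A ^ n = A ^ (n - 1) * A := by
    conv_lhs => rw [show n = (n - 1) + 1 by omega]
    rw [pow_succ]
  rw [hA']
  field_simp

lemma harmonic_cast (M : ℕ) :
    ∑ n ∈ Finset.range M, (1:ℝ) / ((n:ℝ) + 1) = (harmonic M : ℝ) := by
  rw [harmonic]
  push_cast
  exact Finset.sum_congr rfl fun n _ => by rw [one_div]

lemma sum_Icc_int_eq (N : ℕ) :
    ∑ h ∈ Finset.Icc (0:ℤ) (N:ℤ), (1 / (|(h:ℝ)| + 1)) =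
    ∑ n ∈ Finset.range (N+1), (1:ℝ) / ((n:ℝ) + 1) := by
  refine Finset.sum_nbij' (fun h => h.toNat) (fun n => (n:ℤ)) ?_ ?_ ?_ ?_ ?_
  · intro a ha; simp only [Finset.mem_Icc, Finset.mem_range] at ha ⊢; omega
  · intro a ha; simp only [Finset.mem_Icc, Finset.mem_range] at ha ⊢; omega
  · intro a ha; simp only [Finset.mem_Icc] at ha; omega
  · intro a ha; simp only [Finset.mem_range] at ha; simp only [Int.toNat_natCast]
  · intro h hh
    simp only [Finset.mem_Icc] at hh
    have h1 : ((h.toNat : ℕ) : ℝ) = (h : ℝ) := by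
      exact_mod_cast congrArg Int.cast (Int.toNat_of_nonneg hh.1)
    rw [h1, abs_of_nonneg (by exact_mod_cast hh.1)]

lemma harmonic_sum_bound (N : ℕ) (hN : 2 ≤ N) :
    ∑ h ∈ Finset.Icc (-(N : ℤ)) (N : ℤ), (1 / (|(h : ℝ)| + 1)) ≤ 8 * Real.log N := by
  have hsplit : Finset.Icc (-(N:ℤ)) (N:ℤ) = Finset.Icc (-(N:ℤ)) (-1) ∪ Finset.Icc 0 (N:ℤ) := by
    ext h; simp only [Finset.mem_Icc, Finset.mem_union]; omega
  have hdisj : Disjoint (Finset.Icc (-(N:ℤ)) (-1)) (Finset.Icc 0 (N:ℤ)) := by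
    rw [Finset.disjoint_left]
    intro h h1 h2
    simp only [Finset.mem_Icc] at h1 h2
    omega
  rw [hsplit, Finset.sum_union hdisj]
  have hneg : ∑ h ∈ Finset.Icc (-(N:ℤ)) (-1), (1 / (|(h:ℝ)| + 1)) =
      ∑ h ∈ Finset.Icc (1:ℤ) (N:ℤ), (1 / (|(h:ℝ)| + 1)) := by
    refine Finset.sum_nbij' (fun h => -h) (fun h => -h) ?_ ?_ ?_ ?_ ?_
    · intro h hh; simp only [Finset.mem_Icc] at *; omega
    · intro h hh; simp only [Finset.mem_Icc] at *; omega
    · intro h _; ring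
    · intro h _; ring
    · intro h _; push_cast; rw [abs_neg]
  have hsub : ∑ h ∈ Finset.Icc (1:ℤ) (N:ℤ), (1 / (|(h:ℝ)| + 1)) ≤
      ∑ h ∈ Finset.Icc (0:ℤ) (N:ℤ), (1 / (|(h:ℝ)| + 1)) := by
    apply Finset.sum_le_sum_of_subset_of_nonneg
    · exact Finset.Icc_subset_Icc (by omega) le_rfl
    · intro h _ _; positivity
  have hIcc : ∑ h ∈ Finset.Icc (0:ℤ) (N:ℤ), (1 / (|(h:ℝ)| + 1)) = (harmonic (N+1) : ℝ) := by
    rw [sum_Icc_int_eq, harmonic_cast]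
  have hlog : (harmonic (N+1) : ℝ) ≤ 1 + Real.log (N+1) := by
    have := harmonic_le_one_add_log (N+1)
    push_cast at this ⊢
    convert this using 3
  have hlog2 : Real.log ((N:ℝ)+1) ≤ 2 * Real.log N := by
    have hN2 : (2:ℝ) ≤ N := by exact_mod_cast hN
    have h1 : (N:ℝ) + 1 ≤ (N:ℝ)^2 := by nlinarith
    calc Real.log ((N:ℝ)+1) ≤ Real.log ((N:ℝ)^2) := Real.log_le_log (by positivity) h1
      _ = 2 * Real.log N := by rw [Real.log_pow]; norm_num
  have hloghalf : (1:ℝ)/2 ≤ Real.log N := by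
    have h2 : Real.log 2 ≤ Real.log N := Real.log_le_log (by norm_num)
      (by exact_mod_cast hN)
    have := Real.log_two_gt_d9
    linarith
  calc ∑ h ∈ Finset.Icc (-(N:ℤ)) (-1), (1 / (|(h:ℝ)| + 1)) +
        ∑ h ∈ Finset.Icc (0:ℤ) (N:ℤ), (1 / (|(h:ℝ)| + 1))
      ≤ 2 * (harmonic (N+1) : ℝ) := by
        rw [hneg]
        rw [hIcc] at hsub ⊢
        linarith [hsub]
    _ ≤ 2 * (1 + Real.log ((N:ℝ)+1)) := by linarith
    _ ≤ 2 + 4 * Real.log N := by linarith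
    _ ≤ 8 * Real.log N := by linarith

theorem stmt17 (f : ℕ → ℤ) (s : ℕ) (hs : Even s) (hs0 : 0 < s) (t : ℝ) (ht : 0 < t)
    (C : ℝ)
    (hmean : ∀ N : ℕ,
      ∫ x in Set.Icc (0 : ℝ) 1,
          ‖vSum (fun n => ((f n : ℤ) : ℝ)) x N‖ ^ s ≤ C * (N : ℝ) ^ t) :
    ∃ C' : ℝ, ∀ N : ℕ, 2 ≤ N →
      ∫ x in Set.Icc (0 : ℝ) 1, wSum (fun n => ((f n : ℤ) : ℝ)) x N ^ s ≤
        C' * (N : ℝ) ^ t * Real.log N ^ s := by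
  obtain ⟨m, hm⟩ := hs
  have hs2m : s = 2 * m := by omega
  refine ⟨8 ^ s * C, fun N hN2 => ?_⟩
  set F : ℕ → ℝ := fun n => ((f n : ℤ) : ℝ) with hF
  set A : ℝ := ∑ h ∈ Finset.Icc (-(N:ℤ)) (N:ℤ), (1 / (|(h:ℝ)| + 1)) with hA
  have hA1 : (1:ℝ) ≤ A := by
    have h0mem : (0:ℤ) ∈ Finset.Icc (-(N:ℤ)) (N:ℤ) := by
      simp only [Finset.mem_Icc]; omega
    have := Finset.single_le_sum (f := fun h : ℤ => 1 / (|(h:ℝ)| + 1))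
      (fun h _ => by positivity) h0mem
    rw [hA]
    simpa [one_div] using this
  have hA0 : (0:ℝ) < A := lt_of_lt_of_le one_pos hA1
  have hAle : A ≤ 8 * Real.log N := harmonic_sum_bound N hN2
  have hNlog : (0:ℝ) ≤ Real.log N := Real.log_nonneg (by exact_mod_cast Nat.one_le_of_lt hN2)
  set B : ℤ → ℝ → ℝ := fun h x =>
    ‖∑ n ∈ Finset.Icc 1 N, eC ((h:ℝ) * n / N + x * F n)‖ with hB
  have hBc : ∀ h : ℤ, Continuous (B h) := by
    intro h
    apply continuous_norm.comp
    apply continuous_finset_sum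
    intro n _
    unfold eC
    fun_prop
  have hM0 : 0 ≤ C * (N:ℝ) ^ t := le_trans (setIntegral_nonneg measurableSet_Icc
    (fun x _ => by positivity)) (hmean N)
  have hIh : ∀ h : ℤ, (∫ x in Set.Icc (0:ℝ) 1, B h x ^ s) ≤ C * (N:ℝ) ^ t := by
    intro h
    have hTc : ∀ x : ℝ, B h x = ‖Tc f (fun n => eC ((h:ℝ) * n / N)) N x‖ := by
      intro x
      simp only [hB, hF, Tc]
      congr 1
      refine Finset.sum_congr rfl fun n _ => ?_
      rw [← eC_add]
    have hV : ∀ x : ℝ, ‖vSum F x N‖ = ‖Tc f (fun _ => 1) N x‖ := by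
      intro x
      simp only [vSum, Tc, one_mul, hF]
    calc (∫ x in Set.Icc (0:ℝ) 1, B h x ^ s)
        = ∫ x in Set.Icc (0:ℝ) 1,
            ‖Tc f (fun n => eC ((h:ℝ) * n / N)) N x‖ ^ (2*m) := by
          rw [← hs2m]
          exact setIntegral_congr_fun measurableSet_Icc fun x _ => by rw [hTc]
      _ ≤ ∫ x in Set.Icc (0:ℝ) 1, ‖Tc f (fun _ => 1) N x‖ ^ (2*m) :=
          key_lemma f _ m N (fun n => le_of_eq (eC_abs _))
      _ = ∫ x in Set.Icc (0:ℝ) 1, ‖vSum F x N‖ ^ s := by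
          rw [← hs2m]
          exact setIntegral_congr_fun measurableSet_Icc fun x _ => by rw [hV]
      _ ≤ C * (N:ℝ) ^ t := hmean N
  have hW : ∀ x : ℝ, wSum F x N =
      ∑ h ∈ Finset.Icc (-(N:ℤ)) (N:ℤ), (1/(|(h:ℝ)|+1)) * B h x := fun x => rfl
  have hptw : ∀ x ∈ Set.Icc (0:ℝ) 1, wSum F x N ^ s ≤
      A ^ (s-1) * ∑ h ∈ Finset.Icc (-(N:ℤ)) (N:ℤ), (1/(|(h:ℝ)|+1)) * B h x ^ s := by
    intro x _
    rw [hW]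
    exact jensen_weighted _ _ _ (fun h _ => by positivity)
      (fun h _ => norm_nonneg _) s hs0 A hA hA0
  have hWc : Continuous (fun x => wSum F x N) := by
    simp only [hW]
    exact continuous_finset_sum _ fun h _ => continuous_const.mul (hBc h)
  have hRHSc : Continuous (fun x => A ^ (s-1) *
      ∑ h ∈ Finset.Icc (-(N:ℤ)) (N:ℤ), (1/(|(h:ℝ)|+1)) * B h x ^ s) :=
    continuous_const.mul (continuous_finset_sum _ fun h _ =>
      continuous_const.mul ((hBc h).pow s))
  have hIneq1 : (∫ x in Set.Icc (0:ℝ) 1, wSum F x N ^ s) ≤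
      ∫ x in Set.Icc (0:ℝ) 1, A ^ (s-1) *
        ∑ h ∈ Finset.Icc (-(N:ℤ)) (N:ℤ), (1/(|(h:ℝ)|+1)) * B h x ^ s := by
    apply setIntegral_mono_on
    · exact (hWc.pow s).integrableOn_Icc
    · exact hRHSc.integrableOn_Icc
    · exact measurableSet_Icc
    · exact hptw
  have hEq : (∫ x in Set.Icc (0:ℝ) 1, A ^ (s-1) *
        ∑ h ∈ Finset.Icc (-(N:ℤ)) (N:ℤ), (1/(|(h:ℝ)|+1)) * B h x ^ s) =
      A ^ (s-1) * ∑ h ∈ Finset.Icc (-(N:ℤ)) (N:ℤ),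
        (1/(|(h:ℝ)|+1)) * ∫ x in Set.Icc (0:ℝ) 1, B h x ^ s := by
    rw [MeasureTheory.integral_const_mul]
    congr 1
    rw [MeasureTheory.integral_finset_sum _ (fun (h : ℤ) _ =>
      (by exact (continuous_const.mul ((hBc h).pow s)).integrableOn_Icc :
        Integrable (fun x => (1/(|(h:ℝ)|+1)) * B h x ^ s) (volume.restrict (Set.Icc (0:ℝ) 1))))]
    exact Finset.sum_congr rfl fun h _ => MeasureTheory.integral_const_mul _ _
  have hSum : ∑ h ∈ Finset.Icc (-(N:ℤ)) (N:ℤ),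
      (1/(|(h:ℝ)|+1)) * (∫ x in Set.Icc (0:ℝ) 1, B h x ^ s) ≤ A * (C * (N:ℝ)^t) := by
    rw [hA, Finset.sum_mul]
    exact Finset.sum_le_sum fun h _ =>
      mul_le_mul_of_nonneg_left (hIh h) (by positivity)
  have hpow : A ^ (s-1) * A = A ^ s := by
    conv_rhs => rw [show s = (s - 1) + 1 by omega]
    rw [pow_succ]
  calc (∫ x in Set.Icc (0:ℝ) 1, wSum F x N ^ s)
      ≤ A ^ (s-1) * ∑ h ∈ Finset.Icc (-(N:ℤ)) (N:ℤ),
          (1/(|(h:ℝ)|+1)) * ∫ x in Set.Icc (0:ℝ) 1, B h x ^ s := hIneq1.trans_eq hEq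
    _ ≤ A ^ (s-1) * (A * (C * (N:ℝ)^t)) :=
        mul_le_mul_of_nonneg_left hSum (by positivity)
    _ = A ^ s * (C * (N:ℝ)^t) := by rw [← hpow]; ring
    _ ≤ (8 * Real.log N) ^ s * (C * (N:ℝ)^t) :=
        mul_le_mul_of_nonneg_right (pow_le_pow_left₀ hA0.le hAle s) hM0
    _ = 8 ^ s * C * (N:ℝ)^t * Real.log N ^ s := by rw [mul_pow]; ring
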